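/- arXiv:2403.17663 — 2 statements merged into one kernel-verified Lean document; each statement's English description precedes it below -/
import Mathlib

section
/- There exists a finite constant C such that for every integer n ≥ 1 and every x ∈ ℤ² with |x| ≥ 3, the simple symmetric random walk on ℤ² satisfies P(S_n = x) ≤ (2/n)·e^{−|x|²/(2n)} + C/(n·|x|²); equivalently, 4^{−n}·W_n^{o,x} ≤ (2/n)·e^{−|x|²/(2n)} + C/(n·|x|²). -/
open scoped Real

/-- Graph (L¹) distance of `x ∈ ℤ²` from the origin: `|x₁| + |x₂|`. -/
def gnorm (x : ℤ × ℤ) : ℕ := x.1.natAbs + x.2.natAbs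

/-- `W n x` is the number of nearest-neighbour walks of length `n` in `ℤ²`
from the origin `o = (0,0)` to `x`, i.e. the number of sequences
`(v₀, …, v_n)` with `v₀ = o`, `v_n = x` and `|v_{i+1} − v_i| = 1` for all `i`. -/
noncomputable def W (n : ℕ) (x : ℤ × ℤ) : ℕ :=
  Set.ncard {v : Fin (n + 1) → ℤ × ℤ |
    v 0 = (0, 0) ∧ v (Fin.last n) = x ∧
    ∀ i : Fin n, gnorm (v i.succ - v i.castSucc) = 1}

/-- The Green's function `G^{o,x}` of the simple random walk on `ℤ²` with
killing rate `κ`: `G κ x = Σ_{n≥0} (4+κ)^{-n} W_n^{o,x}`. -/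
noncomputable def G (κ : ℝ) (x : ℤ × ℤ) : ℝ :=
  ∑' n : ℕ, (1 / (4 + κ)) ^ n * (W n x : ℝ)

/-!
In the coordinates `x₁ + x₂` and `x₁ - x₂` a nearest-neighbour step of `ℤ²` becomes a pair of
independent `±1` steps, so `W_n^{o,x}` is at most the number of `±1` sequences of length `n`
with sum `x₁ + x₂` times the number with sum `x₁ - x₂`, i.e. a product of two binomial
coefficients. Each obeys the Gaussian bound `C(n, k) ≤ √(2·4ⁿ/n)·exp(-(2k - n)²/(2n))`:
writing `t = (2k + 1 - n)/(n + 1)`, the ratio `C(n, k + 1)/C(n, k) = (1 - t)/(1 + t)` is at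
most `exp(-2t)`, which telescopes down to the middle coefficient, and that one is controlled by
`centralBinom m ^ 2 * (3m + 1) ≤ 16 ^ m`. As `(x₁ + x₂)² + (x₁ - x₂)² ≥ |x|²`, the bound holds
with `C = 0`.
-/

open Real Finset

lemma one_sub_le_one_add_mul_exp {x : ℝ} (h0 : 0 ≤ x) (h1 : x < 1) :
    1 - x ≤ (1 + x) * exp (-(2 * x)) := by
  have hlog : 2 * x ≤ log (1 + x) - log (1 - x) := by
    have hsum := hasSum_log_sub_log_of_abs_lt_one (abs_lt.2 ⟨by linarith, h1⟩)
    simpa using le_hasSum hsum 0 fun k _ => by positivity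
  rw [← exp_log (by linarith : 0 < 1 - x), ← exp_log (by linarith : 0 < 1 + x), ← exp_add]
  exact exp_le_exp.2 (by linarith)

lemma choose_succ_le_mul_exp {n k : ℕ} (hk : n ≤ 2 * k + 1) :
    (n.choose (k + 1) : ℝ) ≤ n.choose k * exp (-(2 * (2 * k + 1 - n) / (n + 1))) := by
  rcases lt_or_ge k n with hkn | hkn
  · set x : ℝ := (2 * k + 1 - n) / (n + 1) with hx
    have hrec : (n.choose (k + 1) : ℝ) * (k + 1) = n.choose k * (n - k) := by
      rw [← Nat.cast_sub hkn.le]; exact_mod_cast Nat.choose_succ_right_eq n k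
    have hstep : (n : ℝ) - k ≤ (k + 1) * exp (-(2 * x)) := by
      have h0 : 0 ≤ x := div_nonneg (by rify at hk; linarith) (by positivity)
      have h1 : x < 1 := (div_lt_one (by positivity)).2 (by rify at hkn; linarith)
      have hsub : (n : ℝ) - k = (n + 1) / 2 * (1 - x) := by rw [hx]; field_simp; ring
      have hadd : (k : ℝ) + 1 = (n + 1) / 2 * (1 + x) := by rw [hx]; field_simp; ring
      rw [hsub, hadd, mul_assoc]
      exact mul_le_mul_of_nonneg_left (one_sub_le_one_add_mul_exp h0 h1) (by positivity)
    rw [← mul_le_mul_iff_of_pos_right (by positivity : (0 : ℝ) < k + 1), hrec]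
    calc (n.choose k : ℝ) * (n - k) ≤ n.choose k * ((k + 1) * exp (-(2 * x))) := by gcongr
      _ = _ := by rw [hx]; ring_nf
  · rw [Nat.choose_eq_zero_of_lt (by omega), Nat.cast_zero]
    positivity

lemma choose_le_choose_half_mul_exp {n k : ℕ} (hk : n / 2 ≤ k) :
    (n.choose k : ℝ) ≤ n.choose (n / 2) * exp (-(((2 * k - n) ^ 2 - 1) / (2 * (n + 1)))) := by
  induction k, hk using Nat.le_induction with
  | base =>
    have hpar : (2 * (n / 2 : ℕ) - n : ℝ) ^ 2 ≤ 1 := by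
      rcases Nat.even_or_odd' n with ⟨m, rfl | rfl⟩ <;>
        norm_num [Nat.mul_div_cancel_left, Nat.mul_add_div]
    have : 0 ≤ -(((2 * (n / 2 : ℕ) - n : ℝ) ^ 2 - 1) / (2 * (n + 1))) :=
      neg_nonneg.2 (div_nonpos_of_nonpos_of_nonneg (by linarith) (by positivity))
    exact le_mul_of_one_le_right (by positivity) (one_le_exp this)
  | succ k hk ih =>
    calc (n.choose (k + 1) : ℝ) ≤ n.choose k * exp (-(2 * (2 * k + 1 - n) / (n + 1))) :=
          choose_succ_le_mul_exp (by omega)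
      _ ≤ n.choose (n / 2) * exp (-(((2 * k - n) ^ 2 - 1) / (2 * (n + 1))))
            * exp (-(2 * (2 * k + 1 - n) / (n + 1))) := by gcongr
      _ = _ := by
        rw [mul_assoc, ← exp_add]; congr 2; push_cast; field_simp; ring

lemma centralBinom_sq_mul_le (m : ℕ) : m.centralBinom ^ 2 * (3 * m + 1) ≤ 16 ^ m := by
  induction m with
  | zero => simp
  | succ m ih =>
    have hrec := Nat.succ_mul_centralBinom_succ m
    have key : (m + 1) ^ 2 * ((m + 1).centralBinom ^ 2 * (3 * (m + 1) + 1))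
        ≤ (m + 1) ^ 2 * 16 ^ (m + 1) :=
      calc (m + 1) ^ 2 * ((m + 1).centralBinom ^ 2 * (3 * (m + 1) + 1))
          = 4 * (2 * m + 1) ^ 2 * (3 * m + 4) * m.centralBinom ^ 2 := by
            rw [← mul_assoc, ← mul_pow, hrec]; ring
        _ ≤ 16 * (m + 1) ^ 2 * (m.centralBinom ^ 2 * (3 * m + 1)) := by
            have : 4 * (2 * m + 1) ^ 2 * (3 * m + 4) ≤ 16 * (m + 1) ^ 2 * (3 * m + 1) := by
              ring_nf; omega
            calc _ ≤ 16 * (m + 1) ^ 2 * (3 * m + 1) * m.centralBinom ^ 2 := by gcongr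
              _ = _ := by ring
        _ ≤ 16 * (m + 1) ^ 2 * 16 ^ m := by gcongr
        _ = (m + 1) ^ 2 * 16 ^ (m + 1) := by ring
    exact Nat.le_of_mul_le_mul_left key (by positivity)

lemma choose_half_sq_mul_le (n : ℕ) : n.choose (n / 2) ^ 2 * (3 * n + 2) ≤ 2 * 4 ^ n := by
  rcases Nat.even_or_odd' n with ⟨m, rfl | rfl⟩
  · rw [Nat.mul_div_cancel_left m two_pos, ← Nat.centralBinom_eq_two_mul_choose]
    calc m.centralBinom ^ 2 * (3 * (2 * m) + 2) = 2 * (m.centralBinom ^ 2 * (3 * m + 1)) := by ring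
      _ ≤ 2 * 16 ^ m := by gcongr; exact centralBinom_sq_mul_le m
      _ = 2 * 4 ^ (2 * m) := by rw [pow_mul]; norm_num
  · have hdiv : (2 * m + 1) / 2 = m := by omega
    have hsucc : (m + 1).centralBinom = 2 * (2 * m + 1).choose m := by
      rw [Nat.centralBinom_eq_two_mul_choose, show 2 * (m + 1) = 2 * m + 1 + 1 by ring,
        Nat.choose_succ_succ, Nat.choose_symm_half]; ring
    have := centralBinom_sq_mul_le (m + 1)
    rw [hsucc] at this
    rw [hdiv]
    refine Nat.le_of_mul_le_mul_right (c := 4) ?_ (by norm_num)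
    calc (2 * m + 1).choose m ^ 2 * (3 * (2 * m + 1) + 2) * 4
        ≤ (2 * (2 * m + 1).choose m) ^ 2 * (3 * (m + 1) + 1) * 2 := by ring_nf; omega
      _ ≤ 16 ^ (m + 1) * 2 := by gcongr
      _ = 2 * 4 ^ (2 * m + 1) * 4 := by rw [pow_succ, pow_succ, pow_mul]; ring

lemma choose_half_mul_exp_half_le {n : ℕ} (hn : 0 < n) :
    (n.choose (n / 2) : ℝ) * exp (1 / 2) ≤ √(2 * 4 ^ n / n) := by
  have hn' : (0 : ℝ) < n := by exact_mod_cast hn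
  have hcentral : ((n.choose (n / 2)) ^ 2 * (3 * n + 2) : ℝ) ≤ 2 * 4 ^ n := by
    exact_mod_cast choose_half_sq_mul_le n
  have he : exp (1 / 2) ^ 2 ≤ 3 := by
    rw [← exp_nat_mul]; norm_num; linarith [exp_one_lt_d9]
  rw [le_sqrt (by positivity) (by positivity), le_div_iff₀ hn', mul_pow]
  calc (n.choose (n / 2) : ℝ) ^ 2 * exp (1 / 2) ^ 2 * n
      ≤ (n.choose (n / 2)) ^ 2 * (3 * n + 2) := by
        rw [mul_assoc]; gcongr; nlinarith
    _ ≤ 2 * 4 ^ n := hcentral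

lemma choose_le_sqrt_mul_exp_of_le {n k : ℕ} (hn : 0 < n) (hnk : n ≤ 2 * k) (hkn : k ≤ n) :
    (n.choose k : ℝ) ≤ √(2 * 4 ^ n / n) * exp (-(2 * k - n) ^ 2 / (2 * n)) := by
  have hn' : (0 : ℝ) < n := by exact_mod_cast hn
  have hexp : -(((2 * k - n : ℝ) ^ 2 - 1) / (2 * (n + 1)))
      ≤ 1 / 2 + -(2 * k - n) ^ 2 / (2 * n) := by
    have hd : (2 * k - n : ℝ) ^ 2 ≤ n ^ 2 := by
      rw [sq_le_sq, abs_of_pos hn', abs_le]; constructor <;> (rify at hnk hkn; linarith)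
    have hgap : 1 / 2 + -(2 * k - n : ℝ) ^ 2 / (2 * n)
          - -(((2 * k - n : ℝ) ^ 2 - 1) / (2 * (n + 1)))
        = (n ^ 2 - (2 * k - n) ^ 2) / (2 * n * (n + 1)) := by
      field_simp; ring
    have : 0 ≤ (n ^ 2 - (2 * k - n : ℝ) ^ 2) / (2 * n * (n + 1)) :=
      div_nonneg (by linarith) (by positivity)
    linarith
  calc (n.choose k : ℝ) ≤ n.choose (n / 2) * exp (-(((2 * k - n) ^ 2 - 1) / (2 * (n + 1)))) :=
        choose_le_choose_half_mul_exp (by omega)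
    _ ≤ n.choose (n / 2) * exp (1 / 2) * exp (-(2 * k - n) ^ 2 / (2 * n)) := by
        rw [mul_assoc, ← exp_add]; gcongr
    _ ≤ _ := by gcongr; exact choose_half_mul_exp_half_le hn

lemma choose_le_sqrt_mul_exp {n : ℕ} (hn : 0 < n) (k : ℕ) :
    (n.choose k : ℝ) ≤ √(2 * 4 ^ n / n) * exp (-(2 * k - n) ^ 2 / (2 * n)) := by
  rcases lt_or_ge n k with hkn | hkn
  · rw [Nat.choose_eq_zero_of_lt hkn, Nat.cast_zero]; positivity
  rcases le_or_gt n (2 * k) with hnk | hnk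
  · exact choose_le_sqrt_mul_exp_of_le hn hnk hkn
  · rw [← Nat.choose_symm hkn]
    convert choose_le_sqrt_mul_exp_of_le hn (k := n - k) (by omega) (by omega) using 4
    push_cast [Nat.cast_sub hkn]; ring

def signSeqs (n : ℕ) (c : ℤ) : Set (Fin n → ℤ) :=
  {ε | (∀ i, ε i = 1 ∨ ε i = -1) ∧ ∑ i, ε i = c}

lemma signSeqs_finite (n : ℕ) (c : ℤ) : (signSeqs n c).Finite :=
  (Set.Finite.pi fun _ => Set.toFinite {1, -1}).subset fun ε hε i _ => by
    rcases hε.1 i with h | h <;> simp [h]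

lemma two_mul_card_filter_eq_one_of_mem_signSeqs {n : ℕ} {c : ℤ} {ε : Fin n → ℤ}
    (hε : ε ∈ signSeqs n c) : 2 * (#{i | ε i = 1} : ℤ) = n + c := by
  have hsign : ∀ i, ε i = 2 * (if ε i = 1 then 1 else 0) - 1 := fun i => by
    rcases hε.1 i with h | h <;> simp [h]
  rw [← hε.2, sum_congr rfl fun i _ => hsign i, sum_sub_distrib, ← mul_sum, sum_boole]
  simp

lemma ncard_signSeqs_le_choose {n k : ℕ} {c : ℤ} (hk : 2 * (k : ℤ) = n + c) :
    (signSeqs n c).ncard ≤ n.choose k := by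
  have hmaps : ∀ ε ∈ signSeqs n c,
      ({i | ε i = 1} : Finset (Fin n)) ∈ (powersetCard k (univ : Finset (Fin n)) : Set _) := by
    intro ε hε
    rw [mem_coe, mem_powersetCard]
    have := two_mul_card_filter_eq_one_of_mem_signSeqs hε
    exact ⟨subset_univ _, by omega⟩
  have hinj :
      Set.InjOn (fun ε : Fin n → ℤ => ({i | ε i = 1} : Finset (Fin n))) (signSeqs n c) := by
    intro ε hε ε' hε' heq
    funext i
    have hi := congrArg (i ∈ ·) heq
    simp only [mem_filter, mem_univ, true_and, eq_iff_iff] at hi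
    rcases hε.1 i with h | h <;> rcases hε'.1 i with h' | h' <;> simp_all
  calc (signSeqs n c).ncard ≤ (powersetCard k (univ : Finset (Fin n)) : Set _).ncard :=
        Set.ncard_le_ncard_of_injOn _ hmaps hinj (Set.toFinite _)
    _ = n.choose k := by
        rw [Set.ncard_coe_finset, card_powersetCard, card_univ, Fintype.card_fin]

lemma ncard_signSeqs_le {n : ℕ} (hn : 0 < n) (c : ℤ) :
    ((signSeqs n c).ncard : ℝ) ≤ √(2 * 4 ^ n / n) * exp (-c ^ 2 / (2 * n)) := by
  rcases (signSeqs n c).eq_empty_or_nonempty with h | ⟨ε, hε⟩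
  · rw [h, Set.ncard_empty, Nat.cast_zero]; positivity
  · have hk := two_mul_card_filter_eq_one_of_mem_signSeqs hε
    have hc : (c : ℝ) = 2 * (#{i | ε i = 1} : ℕ) - n := by
      have := congrArg (Int.cast : ℤ → ℝ) hk; push_cast at this; linarith
    rw [hc]
    exact (Nat.cast_le.2 (ncard_signSeqs_le_choose hk)).trans (choose_le_sqrt_mul_exp hn _)

lemma Fin.sum_succ_sub_castSucc {G : Type*} [AddCommGroup G] {n : ℕ} (g : Fin (n + 1) → G) :
    ∑ i : Fin n, (g i.succ - g i.castSucc) = g (Fin.last n) - g 0 := by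
  induction n with
  | zero => simp
  | succ n ih =>
    rw [Fin.sum_univ_castSucc]
    simp only [Fin.succ_castSucc]
    rw [ih (fun i => g i.castSucc), Fin.succ_last, Fin.castSucc_zero]
    abel

lemma Fin.eq_of_apply_zero_eq_of_succ_sub_eq {G : Type*} [AddCommGroup G] {n : ℕ}
    {v w : Fin (n + 1) → G} (h0 : v 0 = w 0)
    (h : ∀ i : Fin n, v i.succ - v i.castSucc = w i.succ - w i.castSucc) : v = w := by
  funext j
  induction j using Fin.induction with
  | zero => exact h0
  | succ i ih => rw [← sub_add_cancel (v i.succ), h i, ih, sub_add_cancel]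

lemma add_and_sub_eq_pm_one_of_gnorm_eq_one {z : ℤ × ℤ} (hz : gnorm z = 1) :
    (z.1 + z.2 = 1 ∨ z.1 + z.2 = -1) ∧ (z.1 - z.2 = 1 ∨ z.1 - z.2 = -1) := by
  unfold gnorm at hz; omega

lemma W_le_ncard_mul_ncard (n : ℕ) (x : ℤ × ℤ) :
    W n x ≤ (signSeqs n (x.1 + x.2)).ncard * (signSeqs n (x.1 - x.2)).ncard := by
  let Δ (v : Fin (n + 1) → ℤ × ℤ) (i : Fin n) : ℤ × ℤ := v i.succ - v i.castSucc
  let Φ (v : Fin (n + 1) → ℤ × ℤ) : (Fin n → ℤ) × (Fin n → ℤ) :=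
    (fun i => (Δ v i).1 + (Δ v i).2, fun i => (Δ v i).1 - (Δ v i).2)
  refine (Set.ncard_le_ncard_of_injOn Φ ?_ ?_
    ((signSeqs_finite n _).prod (signSeqs_finite n _))).trans Set.ncard_prod.le
  · rintro v ⟨h0, hlast, hstep⟩
    have hsum : ∑ i, Δ v i = x := by
      simp only [Δ, Fin.sum_succ_sub_castSucc, h0, hlast, Prod.mk_zero_zero, sub_zero]
    have hsum₁ : ∑ i, (Δ v i).1 = x.1 := by rw [← Prod.fst_sum, hsum]
    have hsum₂ : ∑ i, (Δ v i).2 = x.2 := by rw [← Prod.snd_sum, hsum]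
    refine ⟨⟨fun i => (add_and_sub_eq_pm_one_of_gnorm_eq_one (hstep i)).1, ?_⟩,
      ⟨fun i => (add_and_sub_eq_pm_one_of_gnorm_eq_one (hstep i)).2, ?_⟩⟩
    · simp only [Φ, sum_add_distrib, hsum₁, hsum₂]
    · simp only [Φ, sum_sub_distrib, hsum₁, hsum₂]
  · rintro v ⟨hv0, -⟩ w ⟨hw0, -⟩ heq
    refine Fin.eq_of_apply_zero_eq_of_succ_sub_eq (hv0.trans hw0.symm) fun i => ?_
    have h₁ := congrFun (congrArg Prod.fst heq) i
    have h₂ := congrFun (congrArg Prod.snd heq) i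
    simp only [Φ, Δ] at h₁ h₂
    exact Prod.ext (by omega) (by omega)

lemma gnorm_sq_le (x : ℤ × ℤ) : (gnorm x : ℝ) ^ 2 ≤ (x.1 + x.2 : ℝ) ^ 2 + (x.1 - x.2) ^ 2 := by
  have hg : (gnorm x : ℝ) = |(x.1 : ℝ)| + |(x.2 : ℝ)| := by simp [gnorm, Nat.cast_natAbs]
  rw [hg]
  nlinarith [sq_nonneg (|(x.1 : ℝ)| - |(x.2 : ℝ)|), sq_abs (x.1 : ℝ), sq_abs (x.2 : ℝ)]

lemma W_le_two_mul_four_pow_div_mul_exp {n : ℕ} (hn : 0 < n) (x : ℤ × ℤ) :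
    (W n x : ℝ) ≤ 2 * 4 ^ n / n * exp (-((x.1 + x.2 : ℝ) ^ 2 + (x.1 - x.2) ^ 2) / (2 * n)) :=
  calc (W n x : ℝ) ≤ (signSeqs n (x.1 + x.2)).ncard * (signSeqs n (x.1 - x.2)).ncard := by
        exact_mod_cast W_le_ncard_mul_ncard n x
    _ ≤ (√(2 * 4 ^ n / n) * exp (-((x.1 + x.2 : ℤ) : ℝ) ^ 2 / (2 * n)))
          * (√(2 * 4 ^ n / n) * exp (-((x.1 - x.2 : ℤ) : ℝ) ^ 2 / (2 * n))) :=
        mul_le_mul (ncard_signSeqs_le hn _) (ncard_signSeqs_le hn _) (by positivity)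
          (by positivity)
    _ = _ := by
        rw [mul_mul_mul_comm, mul_self_sqrt (by positivity), ← exp_add]
        push_cast
        ring_nf

/-- Lemma A.1 (local CLT type bound): there is `C < ∞` such that for every
`n ≥ 1` and `|x| ≥ 3`, `P(Sₙ = x) = 4⁻ⁿ W_n^{o,x} ≤ (2/n) e^{−|x|²/(2n)} + C/(n|x|²)`. -/
theorem stmt18 :
    ∃ C : ℝ, ∀ n : ℕ, 1 ≤ n → ∀ x : ℤ × ℤ, 3 ≤ gnorm x →
      (1 / (4 : ℝ)) ^ n * (W n x : ℝ)
        ≤ 2 / n * Real.exp (-(gnorm x : ℝ) ^ 2 / (2 * n))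
          + C / (n * (gnorm x : ℝ) ^ 2) := by
  refine ⟨0, fun n hn x _ => ?_⟩
  rw [zero_div, add_zero]
  calc (1 / (4 : ℝ)) ^ n * W n x
      ≤ (1 / 4) ^ n * (2 * 4 ^ n / n * exp (-((x.1 + x.2 : ℝ) ^ 2 + (x.1 - x.2) ^ 2) / (2 * n))) :=
        mul_le_mul_of_nonneg_left (W_le_two_mul_four_pow_div_mul_exp hn x) (by positivity)
    _ = 2 / n * exp (-((x.1 + x.2 : ℝ) ^ 2 + (x.1 - x.2) ^ 2) / (2 * n)) := by
        rw [one_div_pow]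
        field_simp
    _ ≤ 2 / n * exp (-(gnorm x : ℝ) ^ 2 / (2 * n)) := by
        gcongr
        exact gnorm_sq_le x
end

section
/- For every killing rate κ > 0, the Green's function at the point (1,1) satisfies G^{o,(1,1)} ≥ (log κ^{−1})/π − 1. -/
open scoped Real

/-!
In the coordinates `(x₁ + x₂, x₁ - x₂)` a nearest-neighbour step of `ℤ²` is a pair of independent
`±1` steps, so a walk of length `2n` to `(1,1)` can be built from a choice of `n + 1` up-steps in
the first coordinate and `n` up-steps in the second: `W_{2n}^{o,(1,1)} ≥ C(2n,n+1) C(2n,n)`.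
Wallis' product gives `C(2n,n)² ≥ 2·16ⁿ/(π(2n+1))`, hence the `2n`-th term of `G` is at least
`rⁿ/(π(n+2))` with `r = 16/(4+κ)²`. Comparing with `-log(1-r) = Σ rᵏ/k` and using `1 - r ≤ κ`
gives the bound.
-/

open Finset
open scoped Nat

theorem Fin.partialSum_last {M : Type*} [AddCommMonoid M] {n : ℕ} (f : Fin n → M) :
    Fin.partialSum f (Fin.last n) = ∑ i, f i := by
  rw [Fin.partialSum, Fin.val_last, List.take_of_length_le (List.length_ofFn (f := f)).le,
    List.sum_ofFn]

theorem Fin.partialSum_injective {G : Type*} [AddGroup G] (n : ℕ) :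
    Function.Injective (Fin.partialSum : (Fin n → G) → Fin (n + 1) → G) := by
  intro f g h
  funext i
  rw [← Fin.partialSum_right_neg f, ← Fin.partialSum_right_neg g, h]

def stepSeqs (n : ℕ) (x : ℤ × ℤ) : Set (Fin n → ℤ × ℤ) :=
  {d | (∀ i, gnorm (d i) = 1) ∧ ∑ i, d i = x}

theorem partialSum_image_stepSeqs (n : ℕ) (x : ℤ × ℤ) :
    Fin.partialSum '' stepSeqs n x = {v : Fin (n + 1) → ℤ × ℤ |
      v 0 = (0, 0) ∧ v (Fin.last n) = x ∧
      ∀ i : Fin n, gnorm (v i.succ - v i.castSucc) = 1} := by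
  ext v
  constructor
  · rintro ⟨d, ⟨hstep, hsum⟩, rfl⟩
    refine ⟨Fin.partialSum_zero d, (Fin.partialSum_last d).trans hsum, fun i => ?_⟩
    rw [sub_eq_neg_add, Fin.partialSum_right_neg]
    exact hstep i
  · rintro ⟨h0, hlast, hstep⟩
    have hv : Fin.partialSum (fun i : Fin n => v i.succ - v i.castSucc) = v := by
      simpa [h0, sub_eq_neg_add, Prod.mk_zero_zero] using Fin.partialSum_left_neg v
    refine ⟨_, ⟨hstep, ?_⟩, hv⟩
    rw [← Fin.partialSum_last, hv, hlast]

theorem W_eq_ncard_stepSeqs (n : ℕ) (x : ℤ × ℤ) : W n x = (stepSeqs n x).ncard := by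
  rw [W, ← partialSum_image_stepSeqs, (Fin.partialSum_injective n).injOn.ncard_image]

def unitSteps : Finset (ℤ × ℤ) := {(1, 0), (-1, 0), (0, 1), (0, -1)}

theorem gnorm_eq_one_iff_mem_unitSteps {d : ℤ × ℤ} : gnorm d = 1 ↔ d ∈ unitSteps := by
  obtain ⟨a, b⟩ := d
  simp only [gnorm, unitSteps, mem_insert, mem_singleton, Prod.mk.injEq]
  omega

theorem stepSeqs_subset_piFinset (n : ℕ) (x : ℤ × ℤ) :
    stepSeqs n x ⊆ ↑(Fintype.piFinset fun _ : Fin n => unitSteps) := fun d hd => by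
  simpa [Fintype.mem_piFinset, gnorm_eq_one_iff_mem_unitSteps] using hd.1

theorem stepSeqs_finite (n : ℕ) (x : ℤ × ℤ) : (stepSeqs n x).Finite :=
  (Finset.finite_toSet _).subset (stepSeqs_subset_piFinset n x)

theorem W_le_four_pow (n : ℕ) (x : ℤ × ℤ) : W n x ≤ 4 ^ n := by
  rw [W_eq_ncard_stepSeqs]
  calc (stepSeqs n x).ncard ≤ (↑(Fintype.piFinset fun _ : Fin n => unitSteps) : Set _).ncard :=
        Set.ncard_le_ncard (stepSeqs_subset_piFinset n x) (Finset.finite_toSet _)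
    _ = 4 ^ n := by rw [Set.ncard_coe_finset, Fintype.card_piFinset]; simp [unitSteps]

/-- `a` and `b` are the signs of the step in the rotated coordinates `x₁ + x₂` and `x₁ - x₂`. -/
def rotatedStep : Bool → Bool → ℤ × ℤ
  | true, true => (1, 0)
  | true, false => (0, 1)
  | false, true => (0, -1)
  | false, false => (-1, 0)

theorem gnorm_rotatedStep (a b : Bool) : gnorm (rotatedStep a b) = 1 := by
  cases a <;> cases b <;> rfl

theorem rotatedStep_fst_add_snd (a b : Bool) :
    (rotatedStep a b).1 + (rotatedStep a b).2 = if a then 1 else -1 := by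
  cases a <;> cases b <;> rfl

theorem rotatedStep_fst_sub_snd (a b : Bool) :
    (rotatedStep a b).1 - (rotatedStep a b).2 = if b then 1 else -1 := by
  cases a <;> cases b <;> rfl

theorem rotatedStep_inj {a b a' b' : Bool} :
    rotatedStep a b = rotatedStep a' b' ↔ a = a' ∧ b = b' := by
  cases a <;> cases b <;> cases a' <;> cases b' <;> decide

theorem sum_ite_mem_one_neg_one {ι : Type*} [Fintype ι] [DecidableEq ι] (A : Finset ι) :
    ∑ i, (if i ∈ A then (1 : ℤ) else -1) = 2 * #A - Fintype.card ι := by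
  rw [sum_ite, sum_const, sum_const, filter_mem_eq_inter, univ_inter, filter_not,
    filter_mem_eq_inter, univ_inter, card_univ_sdiff]
  simp [Nat.cast_sub A.card_le_univ]
  ring

section StepsOfSubsets

variable {m : ℕ}

def stepsOfSubsets (A B : Finset (Fin m)) : Fin m → ℤ × ℤ :=
  fun i => rotatedStep (i ∈ A) (i ∈ B)

theorem stepsOfSubsets_injective :
    Function.Injective fun p : Finset (Fin m) × Finset (Fin m) => stepsOfSubsets p.1 p.2 := by
  rintro ⟨A, B⟩ ⟨A', B'⟩ h
  have hmem (i : Fin m) : (i ∈ A ↔ i ∈ A') ∧ (i ∈ B ↔ i ∈ B') := by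
    simpa [stepsOfSubsets, rotatedStep_inj] using congrFun h i
  exact Prod.ext (Finset.ext fun i => (hmem i).1) (Finset.ext fun i => (hmem i).2)

theorem stepsOfSubsets_mem_stepSeqs {A B : Finset (Fin m)} {x : ℤ × ℤ}
    (hA : x.1 + x.2 = 2 * #A - m) (hB : x.1 - x.2 = 2 * #B - m) :
    stepsOfSubsets A B ∈ stepSeqs m x := by
  refine ⟨fun i => gnorm_rotatedStep _ _, ?_⟩
  have hadd : (∑ i, stepsOfSubsets A B i).1 + (∑ i, stepsOfSubsets A B i).2 = x.1 + x.2 := by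
    simp only [Prod.fst_sum, Prod.snd_sum, ← sum_add_distrib, stepsOfSubsets,
      rotatedStep_fst_add_snd, decide_eq_true_eq, sum_ite_mem_one_neg_one, hA, Fintype.card_fin]
  have hsub : (∑ i, stepsOfSubsets A B i).1 - (∑ i, stepsOfSubsets A B i).2 = x.1 - x.2 := by
    simp only [Prod.fst_sum, Prod.snd_sum, ← sum_sub_distrib, stepsOfSubsets,
      rotatedStep_fst_sub_snd, decide_eq_true_eq, sum_ite_mem_one_neg_one, hB, Fintype.card_fin]
  exact Prod.ext (by omega) (by omega)

theorem choose_mul_choose_le_W (a b : ℕ) {x : ℤ × ℤ}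
    (ha : x.1 + x.2 = 2 * a - m) (hb : x.1 - x.2 = 2 * b - m) :
    m.choose a * m.choose b ≤ W m x := by
  let S := powersetCard a (univ : Finset (Fin m)) ×ˢ powersetCard b (univ : Finset (Fin m))
  rw [W_eq_ncard_stepSeqs]
  calc m.choose a * m.choose b = (S : Set (Finset (Fin m) × Finset (Fin m))).ncard := by
        simp [S, Set.ncard_coe_finset, card_powersetCard]
    _ = ((fun p : Finset (Fin m) × Finset (Fin m) => stepsOfSubsets p.1 p.2) '' S).ncard :=
        (Set.ncard_image_of_injective _ stepsOfSubsets_injective).symm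
    _ ≤ (stepSeqs m x).ncard := by
        refine Set.ncard_le_ncard ?_ (stepSeqs_finite m x)
        rintro _ ⟨⟨A, B⟩, hAB, rfl⟩
        simp only [S, coe_product, Set.mem_prod, mem_coe, mem_powersetCard_univ] at hAB
        exact stepsOfSubsets_mem_stepSeqs (by rw [hAB.1, ha]) (by rw [hAB.2, hb])

end StepsOfSubsets

theorem Real.Wallis.W_mul_centralBinom_sq (n : ℕ) :
    Real.Wallis.W n * (n.centralBinom : ℝ) ^ 2 * (2 * n + 1) = 16 ^ n := by
  have hfact : (n.centralBinom : ℝ) * n ! * n ! = (2 * n)! := by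
    exact_mod_cast two_mul n ▸ Nat.add_choose_mul_factorial_mul_factorial n n
  have hC : (n.centralBinom : ℝ) ≠ 0 := by exact_mod_cast n.centralBinom_ne_zero
  rw [Real.Wallis.W_eq_factorial_ratio, ← hfact, pow_mul]
  field_simp
  norm_num

theorem two_mul_sixteen_pow_le_pi_mul_centralBinom_sq (n : ℕ) :
    2 * 16 ^ n ≤ π * (2 * n + 1) * (n.centralBinom : ℝ) ^ 2 := by
  rw [← Real.Wallis.W_mul_centralBinom_sq]
  have := Real.Wallis.W_le n
  have : 0 ≤ (n.centralBinom : ℝ) ^ 2 * (2 * n + 1) := by positivity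
  nlinarith

theorem sixteen_pow_le_pi_mul_choose_mul_choose {n : ℕ} (hn : 1 ≤ n) :
    (16 : ℝ) ^ n ≤ π * (n + 2) * ((2 * n).choose (n + 1) * (2 * n).choose n : ℕ) := by
  have hnext : ((2 * n).choose (n + 1) : ℝ) * (n + 1) = n.centralBinom * n := by
    have := Nat.choose_succ_right_eq (2 * n) n
    rw [show 2 * n - n = n by omega, ← Nat.centralBinom_eq_two_mul_choose] at this
    exact_mod_cast this
  have hC := two_mul_sixteen_pow_le_pi_mul_centralBinom_sq n
  have hn' : (1 : ℝ) ≤ n := by exact_mod_cast hn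
  have key : (16 : ℝ) ^ n * (n + 1) * (2 * n + 1) ≤
      π * (n + 2) * n.centralBinom ^ 2 * n * (2 * n + 1) := by
    nlinarith [mul_le_mul_of_nonneg_left hC (by positivity : (0 : ℝ) ≤ n * (n + 2)),
      mul_le_mul_of_nonneg_left hn' (by positivity : (0 : ℝ) ≤ 16 ^ n)]
  refine le_of_mul_le_mul_right ?_ (by positivity : (0 : ℝ) < n + 1)
  rw [Nat.cast_mul, ← Nat.centralBinom_eq_two_mul_choose]
  calc (16 : ℝ) ^ n * (n + 1) ≤ π * (n + 2) * n.centralBinom ^ 2 * n :=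
        le_of_mul_le_mul_right key (by positivity)
    _ = _ := by linear_combination (-(π * (n + 2) * n.centralBinom)) * hnext

theorem pow_div_le_pow_mul_W {s : ℝ} (hs : 0 ≤ s) (hr : 16 * s ^ 2 ≤ 1) (n : ℕ) :
    (16 * s ^ 2) ^ (n + 3) / (π * (n + 3)) ≤
      s ^ (2 * (n + 1)) * (W (2 * (n + 1)) (1, 1) : ℝ) := by
  have hcount := sixteen_pow_le_pi_mul_choose_mul_choose (n := n + 1) (by omega)
  have hW : (((2 * (n + 1)).choose (n + 1 + 1) * (2 * (n + 1)).choose (n + 1) : ℕ) : ℝ) ≤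
      W (2 * (n + 1)) (1, 1) := by
    exact_mod_cast choose_mul_choose_le_W _ _ (by push_cast; ring) (by push_cast; ring)
  calc (16 * s ^ 2) ^ (n + 3) / (π * (n + 3)) ≤ (16 * s ^ 2) ^ (n + 1) / (π * (n + 3)) := by
        gcongr ?_ / _
        exact pow_le_pow_of_le_one (by positivity) hr (by omega)
    _ = s ^ (2 * (n + 1)) * (16 ^ (n + 1) / (π * (n + 3))) := by rw [mul_pow, pow_mul]; ring
    _ ≤ s ^ (2 * (n + 1)) * (W (2 * (n + 1)) (1, 1) : ℝ) := by
        gcongr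
        rw [div_le_iff₀ (by positivity)]
        calc (16 : ℝ) ^ (n + 1) ≤ π * ((n + 1 : ℕ) + 2) * _ := hcount
          _ ≤ π * ((n + 1 : ℕ) + 2) * W (2 * (n + 1)) (1, 1) := by gcongr
          _ = _ := by push_cast; ring

theorem summable_pow_mul_W {κ : ℝ} (hκ : 0 < κ) (x : ℤ × ℤ) :
    Summable fun n : ℕ => (1 / (4 + κ)) ^ n * (W n x : ℝ) := by
  have hq : 4 / (4 + κ) < 1 := by rw [div_lt_one (by positivity)]; linarith
  refine Summable.of_nonneg_of_le (fun n => by positivity) (fun n => ?_)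
    (summable_geometric_of_lt_one (by positivity) hq)
  calc (1 / (4 + κ)) ^ n * (W n x : ℝ) ≤ (1 / (4 + κ)) ^ n * 4 ^ n := by
        gcongr; exact_mod_cast W_le_four_pow n x
    _ = (4 / (4 + κ)) ^ n := by rw [← mul_pow, one_div_mul_eq_div]

theorem Real.hasSum_pow_add_three_div {r : ℝ} (hr : |r| < 1) :
    HasSum (fun n : ℕ => r ^ (n + 3) / (n + 3)) (-Real.log (1 - r) - r - r ^ 2 / 2) := by
  have h := (hasSum_nat_add_iff' 2).mpr (Real.hasSum_pow_div_log_of_abs_lt_one hr)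
  have hterm : (fun n : ℕ => r ^ (n + 2 + 1) / ((n + 2 : ℕ) + 1 : ℝ)) =
      fun n : ℕ => r ^ (n + 3) / (n + 3) := by
    funext n; push_cast; ring_nf
  have hsum : -Real.log (1 - r) - ∑ i ∈ Finset.range 2, r ^ (i + 1) / ((i : ℝ) + 1) =
      -Real.log (1 - r) - r - r ^ 2 / 2 := by
    simp [Finset.sum_range_succ]; ring
  rwa [hterm, hsum] at h

theorem neg_log_one_sub_div_pi_le_G {κ : ℝ} (hκ : 0 < κ) :
    (-Real.log (1 - 16 / (4 + κ) ^ 2) - 16 / (4 + κ) ^ 2 - (16 / (4 + κ) ^ 2) ^ 2 / 2) / π ≤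
      G κ (1, 1) := by
  set s := 1 / (4 + κ)
  have hr : 16 / (4 + κ) ^ 2 = 16 * s ^ 2 := by rw [div_pow, one_pow, mul_one_div]
  have hr1 : 16 * s ^ 2 < 1 := by
    rw [← hr, div_lt_one (by positivity)]
    nlinarith
  have hlog := (Real.hasSum_pow_add_three_div (abs_lt.2 ⟨by nlinarith, hr1⟩)).div_const π
  have hinj : Function.Injective fun n : ℕ => 2 * (n + 1) := fun a b h => by
    simp only at h; omega
  rw [hr, ← hlog.tsum_eq]
  refine Summable.tsum_le_tsum_of_inj _ hinj (fun n _ => by positivity) (fun n => ?_)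
    hlog.summable (summable_pow_mul_W hκ _)
  rw [div_div, mul_comm _ π]
  exact pow_div_le_pow_mul_W (by positivity) hr1.le n

/-- Lemma 6.1: `G^{o,(1,1)} ≥ (log κ⁻¹)/π − 1` for every `κ > 0`. -/
theorem stmt19 (κ : ℝ) (hκ : 0 < κ) :
    Real.log κ⁻¹ / π - 1 ≤ G κ (1, 1) := by
  set r : ℝ := 16 / (4 + κ) ^ 2
  have hr : r < 1 := by rw [div_lt_one (by positivity)]; nlinarith
  have hr0 : 0 ≤ r := by positivity
  have h1r : 1 - r ≤ κ := by
    rw [sub_le_comm, le_div_iff₀ (by positivity)]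
    nlinarith [mul_pos hκ (mul_pos hκ hκ)]
  have hlog : Real.log κ⁻¹ ≤ -Real.log (1 - r) := by
    rw [Real.log_inv, neg_le_neg_iff]
    exact Real.log_le_log (by linarith) h1r
  have hπ : r + r ^ 2 / 2 ≤ π := by nlinarith [Real.pi_gt_three]
  calc Real.log κ⁻¹ / π - 1 = (Real.log κ⁻¹ - π) / π := by field_simp
    _ ≤ (-Real.log (1 - r) - r - r ^ 2 / 2) / π := by gcongr ?_ / _; linarith
    _ ≤ G κ (1, 1) := neg_log_one_sub_div_pi_le_G hκ
end
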